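/- If (I, α) and (J, β) are unit objects in a strict semi-monoidal 2-category, with chosen left constraint λ_X : I⊗X → X for I and right constraint r_X : X⊗J → X for J, then the object I⊗J together with the arrow γ := (r_I ⊗ λ_J) : (I⊗J)⊗(I⊗J) → I⊗J is again a unit object. -/

import Mathlib

open CategoryTheory

universe w v u

section Two
variable {B : Type u} [Bicategory.{w, v} B] [Bicategory.Strict B]

open Bicategory

/-- A 1-cell admitting a pseudo-inverse. -/
def IsEquiArrow {a b : B} (f : a ⟶ b) : Prop :=
  ∃ g : b ⟶ a, Nonempty (f ≫ g ≅ 𝟙 a) ∧ Nonempty (g ≫ f ≅ 𝟙 b)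

/-- A strict (2-functorial, strictly associative) tensor product on a strict 2-category. -/
structure Tensor2 (B : Type u) [Bicategory.{w, v} B] [Bicategory.Strict B] where
  obj : B → B → B
  hom : ∀ {a b c d : B}, (a ⟶ b) → (c ⟶ d) → (obj a c ⟶ obj b d)
  cell : ∀ {a b c d : B} {f f' : a ⟶ b} {g g' : c ⟶ d},
    (f ⟶ f') → (g ⟶ g') → (hom f g ⟶ hom f' g')
  hom_id : ∀ (a c : B), hom (𝟙 a) (𝟙 c) = 𝟙 (obj a c)
  hom_comp : ∀ {a b c a' b' c' : B} (f : a ⟶ b) (g : b ⟶ c) (f' : a' ⟶ b') (g' : b' ⟶ c'),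
    hom (f ≫ g) (f' ≫ g') = hom f f' ≫ hom g g'
  cell_id : ∀ {a b c d : B} (f : a ⟶ b) (g : c ⟶ d), cell (𝟙 f) (𝟙 g) = 𝟙 (hom f g)
  cell_comp : ∀ {a b c d : B} {f f' f'' : a ⟶ b} {g g' g'' : c ⟶ d}
    (η : f ⟶ f') (η' : f' ⟶ f'') (θ : g ⟶ g') (θ' : g' ⟶ g''),
    cell (η ≫ η') (θ ≫ θ') = cell η θ ≫ cell η' θ'
  cell_whisker : ∀ {a b c a' b' c' : B} {f₁ f₂ : a ⟶ b} {g₁ g₂ : b ⟶ c}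
    {f₁' f₂' : a' ⟶ b'} {g₁' g₂' : b' ⟶ c'}
    (η : f₁ ⟶ f₂) (θ : g₁ ⟶ g₂) (η' : f₁' ⟶ f₂') (θ' : g₁' ⟶ g₂'),
    cell (η ▷ g₁ ≫ f₂ ◁ θ) (η' ▷ g₁' ≫ f₂' ◁ θ') =
      eqToHom (hom_comp f₁ g₁ f₁' g₁') ≫ (cell η η' ▷ hom g₁ g₁') ≫
        (hom f₂ f₂' ◁ cell θ θ') ≫ eqToHom (hom_comp f₂ g₂ f₂' g₂').symm
  assoc : ∀ (a b c : B), obj (obj a b) c = obj a (obj b c)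
  hom_assoc : ∀ {a a' b b' c c' : B} (f : a ⟶ a') (g : b ⟶ b') (k : c ⟶ c'),
    hom (hom f g) k ≫ eqToHom (assoc a' b' c') = eqToHom (assoc a b c) ≫ hom f (hom g k)

variable (T : Tensor2 B)

/-- The 2-functor "tensoring with `I` on the left", as a functor on hom-categories. -/
def lFun (I X Y : B) : (X ⟶ Y) ⥤ (T.obj I X ⟶ T.obj I Y) where
  obj f := T.hom (𝟙 I) f
  map η := T.cell (𝟙 (𝟙 I)) η
  map_id f := T.cell_id _ _
  map_comp {f g h} η θ := by
    have := T.cell_comp (𝟙 (𝟙 I)) (𝟙 (𝟙 I)) η θ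
    simpa using this

/-- The 2-functor "tensoring with `I` on the right", as a functor on hom-categories. -/
def rFun (I X Y : B) : (X ⟶ Y) ⥤ (T.obj X I ⟶ T.obj Y I) where
  obj f := T.hom f (𝟙 I)
  map η := T.cell η (𝟙 (𝟙 I))
  map_id f := T.cell_id _ _
  map_comp {f g h} η θ := by
    have := T.cell_comp η θ (𝟙 (𝟙 I)) (𝟙 (𝟙 I))
    simpa using this

/-- Cancellable object: tensoring with it on either side is fully faithful, i.e. induces
equivalences of hom-categories. -/
def Cancellable2 (I : B) : Prop :=
  (∀ X Y : B, (lFun T I X Y).IsEquivalence) ∧ (∀ X Y : B, (rFun T I X Y).IsEquivalence)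

/-- A unit object: a cancellable pseudo-idempotent. -/
def IsUnit2 (I : B) (α : T.obj I I ⟶ I) : Prop :=
  Cancellable2 T I ∧ IsEquiArrow α

end Two

open CategoryTheory Bicategory

/-! If `e : K ⟶ K'` is an equi-arrow, the interchange law `(K ⊗ f) ≫ (e ⊗ Y) = e ⊗ f =
(e ⊗ X) ≫ (K' ⊗ f)` exhibits `K ⊗ -` and `K' ⊗ -` as the same functor up to composing with the
equivalences of hom-categories induced by the equi-arrows `e ⊗ X` and `e ⊗ Y`. So cancellability
(on either side) transfers along equi-arrows. For `I ⊗ J` it is inherited on the left from `J`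
along `λ_J` and on the right from `I` along `r_I`, and `γ = r_I ⊗ λ_J` is a tensor product of
equi-arrows. -/

section EquiArrow

variable {B : Type u} [Bicategory.{w, v} B] [Bicategory.Strict B]

theorem isEquiArrow_id (a : B) : IsEquiArrow (𝟙 a) :=
  ⟨𝟙 a, ⟨eqToIso (by simp)⟩, ⟨eqToIso (by simp)⟩⟩

theorem IsEquiArrow.precomp_isEquivalence {a b : B} {f : a ⟶ b} (hf : IsEquiArrow f) (c : B) :
    (precomp c f).IsEquivalence := by
  obtain ⟨g, ⟨i⟩, ⟨j⟩⟩ := hf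
  exact (CategoryTheory.Equivalence.mk (precomp c f) (precomp c g)
    ((associatorNatIsoRight g f c).symm ≪≫ (precomposing b b c).mapIso j ≪≫
      leftUnitorNatIso b c).symm
    ((associatorNatIsoRight f g c).symm ≪≫ (precomposing a a c).mapIso i ≪≫
      leftUnitorNatIso a c)).isEquivalence_functor

theorem IsEquiArrow.postcomp_isEquivalence {b c : B} {f : b ⟶ c} (hf : IsEquiArrow f) (a : B) :
    (postcomp a f).IsEquivalence := by
  obtain ⟨g, ⟨i⟩, ⟨j⟩⟩ := hf
  exact (CategoryTheory.Equivalence.mk (postcomp a f) (postcomp a g)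
    (associatorNatIsoLeft a f g ≪≫ (postcomposing a b b).mapIso i ≪≫
      rightUnitorNatIso a b).symm
    (associatorNatIsoLeft a g f ≪≫ (postcomposing a c c).mapIso j ≪≫
      rightUnitorNatIso a c)).isEquivalence_functor

end EquiArrow

namespace Tensor2

variable {B : Type u} [Bicategory.{w, v} B] [Bicategory.Strict B] (T : Tensor2 B)

def cellIso {a b c d : B} {f f' : a ⟶ b} {g g' : c ⟶ d} (i : f ≅ f') (j : g ≅ g') :
    T.hom f g ≅ T.hom f' g' where
  hom := T.cell i.hom j.hom
  inv := T.cell i.inv j.inv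
  hom_inv_id := by rw [← T.cell_comp, i.hom_inv_id, j.hom_inv_id, T.cell_id]
  inv_hom_id := by rw [← T.cell_comp, i.inv_hom_id, j.inv_hom_id, T.cell_id]

theorem isEquiArrow_hom {a b c d : B} {f : a ⟶ b} {g : c ⟶ d}
    (hf : IsEquiArrow f) (hg : IsEquiArrow g) : IsEquiArrow (T.hom f g) := by
  obtain ⟨f', ⟨i⟩, ⟨i'⟩⟩ := hf
  obtain ⟨g', ⟨j⟩, ⟨j'⟩⟩ := hg
  exact ⟨T.hom f' g',
    ⟨eqToIso (T.hom_comp f f' g g').symm ≪≫ T.cellIso i j ≪≫ eqToIso (T.hom_id a c)⟩,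
    ⟨eqToIso (T.hom_comp f' f g' g).symm ≪≫ T.cellIso i' j' ≪≫ eqToIso (T.hom_id b d)⟩⟩

theorem cell_eqToHom {a b c d : B} {f f' : a ⟶ b} {g g' : c ⟶ d} (hf : f = f') (hg : g = g') :
    T.cell (eqToHom hf) (eqToHom hg) = eqToHom (by rw [hf, hg]) := by
  subst hf hg
  exact T.cell_id _ _

theorem id_hom_comp_hom_id {K K' X Y : B} (e : K ⟶ K') (f : X ⟶ Y) :
    T.hom (𝟙 K) f ≫ T.hom e (𝟙 Y) = T.hom e f := by
  rw [← T.hom_comp, Category.id_comp, Category.comp_id]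

theorem hom_id_comp_id_hom {K K' X Y : B} (e : K ⟶ K') (f : X ⟶ Y) :
    T.hom e (𝟙 X) ≫ T.hom (𝟙 K') f = T.hom e f := by
  rw [← T.hom_comp, Category.id_comp, Category.comp_id]

theorem cell_id_whiskerRight {K K' X Y : B} (e : K ⟶ K') {f f' : X ⟶ Y} (η : f ⟶ f') :
    T.cell (𝟙 (𝟙 K)) η ▷ T.hom e (𝟙 Y) =
      eqToHom (T.id_hom_comp_hom_id e f) ≫ T.cell (𝟙 e) η ≫
        eqToHom (T.id_hom_comp_hom_id e f').symm := by
  have h := T.cell_whisker (𝟙 (𝟙 K)) (𝟙 e) η (𝟙 (𝟙 Y))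
  rw [T.cell_id] at h
  simp only [id_whiskerRight, whiskerLeft_id, whiskerRight_id, Strict.rightUnitor_eqToIso,
    eqToIso.hom, eqToIso.inv, Category.comp_id, Category.id_comp] at h
  rw [show 𝟙 (𝟙 K ≫ e) = eqToHom (Category.id_comp e) ≫ 𝟙 e ≫ eqToHom (Category.id_comp e).symm
      by simp, T.cell_comp, T.cell_comp, T.cell_eqToHom, T.cell_eqToHom] at h
  rw [eq_comm, eqToHom_comp_iff, comp_eqToHom_iff] at h
  rw [h]
  simp

theorem whiskerLeft_cell_id {K K' X Y : B} (e : K ⟶ K') {f f' : X ⟶ Y} (η : f ⟶ f') :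
    T.hom e (𝟙 X) ◁ T.cell (𝟙 (𝟙 K')) η =
      eqToHom (T.hom_id_comp_id_hom e f) ≫ T.cell (𝟙 e) η ≫
        eqToHom (T.hom_id_comp_id_hom e f').symm := by
  have h := T.cell_whisker (𝟙 e) (𝟙 (𝟙 K')) (𝟙 (𝟙 X)) η
  rw [T.cell_id] at h
  simp only [id_whiskerRight, whiskerLeft_id, id_whiskerLeft, Strict.leftUnitor_eqToIso,
    eqToIso.hom, eqToIso.inv, Category.comp_id, Category.id_comp] at h
  rw [show 𝟙 (e ≫ 𝟙 K') = eqToHom (Category.comp_id e) ≫ 𝟙 e ≫ eqToHom (Category.comp_id e).symm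
      by simp, T.cell_comp, T.cell_comp, T.cell_eqToHom, T.cell_eqToHom] at h
  rw [eq_comm, eqToHom_comp_iff, comp_eqToHom_iff] at h
  rw [h]
  simp

theorem hom_interchange {K K' X Y : B} (e : K ⟶ K') (f : X ⟶ Y) :
    T.hom (𝟙 K) f ≫ T.hom e (𝟙 Y) = T.hom e (𝟙 X) ≫ T.hom (𝟙 K') f :=
  (T.id_hom_comp_hom_id e f).trans (T.hom_id_comp_id_hom e f).symm

theorem lFun_comp_postcomp {K K' : B} (e : K ⟶ K') (X Y : B) :
    lFun T K X Y ⋙ postcomp _ (T.hom e (𝟙 Y)) = lFun T K' X Y ⋙ precomp _ (T.hom e (𝟙 X)) := by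
  refine CategoryTheory.Functor.ext (T.hom_interchange e) (fun f f' η => ?_)
  change T.cell (𝟙 (𝟙 K)) η ▷ T.hom e (𝟙 Y) = eqToHom (T.hom_interchange e f) ≫
    T.hom e (𝟙 X) ◁ T.cell (𝟙 (𝟙 K')) η ≫ eqToHom (T.hom_interchange e f').symm
  simp [cell_id_whiskerRight, whiskerLeft_cell_id]

theorem isEquivalence_lFun_of_isEquiArrow {K K' : B} {e : K ⟶ K'} (he : IsEquiArrow e)
    {X Y : B} (h : (lFun T K' X Y).IsEquivalence) : (lFun T K X Y).IsEquivalence := by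
  have := (T.isEquiArrow_hom he (isEquiArrow_id Y)).postcomp_isEquivalence (T.obj K X)
  have := (T.isEquiArrow_hom he (isEquiArrow_id X)).precomp_isEquivalence (T.obj K' Y)
  have : (lFun T K X Y ⋙ postcomp _ (T.hom e (𝟙 Y))).IsEquivalence := by
    rw [T.lFun_comp_postcomp e X Y]
    infer_instance
  exact Functor.isEquivalence_of_comp_right _ (postcomp _ (T.hom e (𝟙 Y)))

def swap : Tensor2 B where
  obj a b := T.obj b a
  hom f g := T.hom g f
  cell η θ := T.cell θ η
  hom_id a c := T.hom_id c a
  hom_comp f g f' g' := T.hom_comp f' g' f g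
  cell_id f g := T.cell_id g f
  cell_comp η η' θ θ' := T.cell_comp θ θ' η η'
  cell_whisker η θ η' θ' := T.cell_whisker η' θ' η θ
  assoc a b c := (T.assoc c b a).symm
  hom_assoc f g k := by
    rw [eq_comm, eqToHom_comp_iff, ← Category.assoc, ← T.hom_assoc]
    simp

theorem isEquivalence_rFun_of_isEquiArrow {K K' : B} {e : K ⟶ K'} (he : IsEquiArrow e)
    {X Y : B} (h : (rFun T K' X Y).IsEquivalence) : (rFun T K X Y).IsEquivalence :=
  -- `rFun T K` is definitionally `lFun T.swap K`.
  T.swap.isEquivalence_lFun_of_isEquiArrow he h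

end Tensor2

theorem tensor_of_units_is_unit_general
    {B : Type*} [Bicategory B] [Bicategory.Strict B] (T : Tensor2 B)
    {I : B} {α : T.obj I I ⟶ I} (hI : IsUnit2 T I α)
    {J : B} {β : T.obj J J ⟶ J} (hJ : IsUnit2 T J β)
    (lamJ : T.obj I J ⟶ J)
    (hlamJ : IsEquiArrow lamJ)
    (rI : T.obj I J ⟶ I)
    (hrI : IsEquiArrow rI) :
    IsUnit2 T (T.obj I J) (T.hom rI lamJ) := by
  obtain ⟨⟨-, hIr⟩, -⟩ := hI
  obtain ⟨⟨hJl, -⟩, -⟩ := hJ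
  exact ⟨⟨fun _ _ => T.isEquivalence_lFun_of_isEquiArrow hlamJ (hJl _ _),
    fun _ _ => T.isEquivalence_rFun_of_isEquiArrow hrI (hIr _ _)⟩, T.isEquiArrow_hom hrI hlamJ⟩

/-- If `(I, α)` and `(J, β)` are unit objects in a strict semi-monoidal 2-category, with a
chosen left constraint `λ_J : I ⊗ J ⟶ J` for `I` (with invertible `L : I ⊗ λ_J ⟹ α ⊗ J`) and
a chosen right constraint `r_I : I ⊗ J ⟶ I` for `J` (with invertible
`R : I ⊗ β ⟹ r_I ⊗ J`), the object `I ⊗ J` with `γ := r_I ⊗ λ_J` is again a unit object. -/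
theorem tensor_of_units_is_unit
    {B : Type*} [Bicategory B] [Bicategory.Strict B] (T : Tensor2 B)
    {I : B} {α : T.obj I I ⟶ I} (hI : IsUnit2 T I α)
    {J : B} {β : T.obj J J ⟶ J} (hJ : IsUnit2 T J β)
    (lamJ : T.obj I J ⟶ J)
    (L : T.hom (𝟙 I) lamJ ⟶ eqToHom (T.assoc I I J).symm ≫ T.hom α (𝟙 J))
    (hlamJ : IsEquiArrow lamJ) (hL : IsIso L)
    (rI : T.obj I J ⟶ I)
    (R : T.hom (𝟙 I) β ⟶ eqToHom (T.assoc I J J).symm ≫ T.hom rI (𝟙 J))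
    (hrI : IsEquiArrow rI) (hR : IsIso R) :
    IsUnit2 T (T.obj I J) (T.hom rI lamJ) :=
  tensor_of_units_is_unit_general T hI hJ lamJ hlamJ rI hrI
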